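/- arXiv:2506.00390 — 2 statements merged into one kernel-verified Lean document; each statement's English description precedes it below -/
import Mathlib

section
/- For ζ₁, ζ₂ ∈ ℝⁿ and p > 1, there exist constants C₃, C₄ > 0 depending only on p such that C₃·(max{|ζ₁ - ζ₂|, |ζ₂|})^(p-2)·|ζ₁ - ζ₂|² ≤ (|ζ₁|^(p-2)ζ₁ - |ζ₂|^(p-2)ζ₂)·(ζ₁ - ζ₂) ≤ C₄·(max{|ζ₁ - ζ₂|, |ζ₂|})^(p-2)·|ζ₁ - ζ₂|². -/
/-!
Write `A = ‖a‖`, `B = ‖b‖` and `s = ⟪a, b⟫`. For fixed norms, both `⟪A^(p-2) a - B^(p-2) b, a - b⟫`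
and `‖a - b‖²` are affine in `s ∈ [-AB, AB]`, so each bound only has to be checked at the two
endpoints, where `a` and `b` are aligned or opposed. Assuming `B ≤ A`, these are one-dimensional
estimates of `A^(p-1) ∓ B^(p-1)` against `A^(p-2) (A ∓ B)`, which after scaling by `A` are
Bernoulli's inequality and its reverse for the exponent `p - 1`. This gives the bounds with the
weight `max(A, B)^(p-2)`, and `max(A, B)` is within a factor `2` of `max(‖a - b‖, B)`.
-/

open Real

theorem min_one_mul_one_sub_le_one_sub_rpow {r t : ℝ} (hr : 0 ≤ r) (ht₀ : 0 ≤ t) (ht₁ : t ≤ 1) :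
    min 1 r * (1 - t) ≤ 1 - t ^ r := by
  rcases le_total r 1 with hr₁ | hr₁
  · have := rpow_one_add_le_one_add_mul_self (s := t - 1) (by linarith) hr hr₁
    rw [add_sub_cancel] at this
    rw [min_eq_right hr₁]; linarith
  · have := rpow_le_self_of_le_one ht₀ ht₁ hr₁
    rw [min_eq_left hr₁]; linarith

theorem one_sub_rpow_le_max_one_mul_one_sub {r t : ℝ} (ht₀ : 0 ≤ t) (ht₁ : t ≤ 1) :
    1 - t ^ r ≤ max 1 r * (1 - t) := by
  rcases le_total r 1 with hr₁ | hr₁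
  · have := self_le_rpow_of_le_one ht₀ ht₁ hr₁
    rw [max_eq_left hr₁]; linarith
  · have := one_add_mul_self_le_rpow_one_add (s := t - 1) (by linarith) hr₁
    rw [add_sub_cancel] at this
    rw [max_eq_right hr₁]; linarith

theorem rpow_sub_rpow_eq_rpow_mul_one_sub_div_rpow {A B : ℝ} (hA : 0 < A) (hB : 0 ≤ B) (r : ℝ) :
    A ^ r - B ^ r = A ^ r * (1 - (B / A) ^ r) := by
  rw [div_rpow hB hA.le, mul_one_sub, mul_div_cancel₀ _ (rpow_pos_of_pos hA r).ne']

theorem rpow_sub_two_mul_self {A p : ℝ} (hA : 0 < A) : A ^ (p - 2) * A = A ^ (p - 1) := by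
  rw [← rpow_add_one hA.ne']; ring_nf

theorem rpow_sub_two_mul_sub_eq {A B p : ℝ} (hA : 0 < A) :
    A ^ (p - 2) * (A - B) = A ^ (p - 1) * (1 - B / A) := by
  rw [← rpow_sub_two_mul_self hA]
  field_simp

theorem min_one_mul_rpow_mul_sub_le_rpow_sub_rpow {p A B : ℝ} (hp : 1 ≤ p) (hA : 0 < A)
    (hB : 0 ≤ B) (hBA : B ≤ A) :
    min 1 (p - 1) * A ^ (p - 2) * (A - B) ≤ A ^ (p - 1) - B ^ (p - 1) := by
  rw [mul_assoc, rpow_sub_two_mul_sub_eq hA, rpow_sub_rpow_eq_rpow_mul_one_sub_div_rpow hA hB,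
    mul_left_comm]
  exact mul_le_mul_of_nonneg_left
    (min_one_mul_one_sub_le_one_sub_rpow (by linarith) (div_nonneg hB hA.le)
      ((div_le_one hA).2 hBA))
    (rpow_nonneg hA.le _)

theorem rpow_sub_rpow_le_max_one_mul_rpow_mul_sub {p A B : ℝ} (hA : 0 < A) (hB : 0 ≤ B)
    (hBA : B ≤ A) :
    A ^ (p - 1) - B ^ (p - 1) ≤ max 1 (p - 1) * A ^ (p - 2) * (A - B) := by
  rw [mul_assoc, rpow_sub_two_mul_sub_eq hA, rpow_sub_rpow_eq_rpow_mul_one_sub_div_rpow hA hB,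
    mul_left_comm]
  exact mul_le_mul_of_nonneg_left
    (one_sub_rpow_le_max_one_mul_one_sub (div_nonneg hB hA.le) ((div_le_one hA).2 hBA))
    (rpow_nonneg hA.le _)

theorem rpow_endpoint_lower_bounds {p A B : ℝ} (hp : 1 ≤ p) (hA : 0 < A) (hB : 0 ≤ B)
    (hBA : B ≤ A) :
    min 1 (p - 1) / 2 * A ^ (p - 2) * (A - B) ^ 2 ≤ (A ^ (p - 1) - B ^ (p - 1)) * (A - B) ∧
      min 1 (p - 1) / 2 * A ^ (p - 2) * (A + B) ^ 2 ≤ (A ^ (p - 1) + B ^ (p - 1)) * (A + B) := by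
  have hmin : 0 ≤ min 1 (p - 1) := le_min zero_le_one (by linarith)
  have hmin₁ : min 1 (p - 1) ≤ 1 := min_le_left _ _
  constructor
  · calc min 1 (p - 1) / 2 * A ^ (p - 2) * (A - B) ^ 2
        ≤ min 1 (p - 1) * A ^ (p - 2) * (A - B) * (A - B) := by
          nlinarith [mul_nonneg hmin (mul_nonneg (rpow_nonneg hA.le (p - 2)) (sq_nonneg (A - B)))]
      _ ≤ (A ^ (p - 1) - B ^ (p - 1)) * (A - B) := by
          gcongr
          exact min_one_mul_rpow_mul_sub_le_rpow_sub_rpow hp hA hB hBA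
  · calc min 1 (p - 1) / 2 * A ^ (p - 2) * (A + B) ^ 2
        ≤ 1 / 2 * A ^ (p - 2) * (2 * A * (A + B)) := by gcongr; nlinarith
      _ = A ^ (p - 1) * (A + B) := by rw [← rpow_sub_two_mul_self hA]; ring
      _ ≤ (A ^ (p - 1) + B ^ (p - 1)) * (A + B) := by
        gcongr; exact le_add_of_nonneg_right (rpow_nonneg hB _)

theorem rpow_endpoint_upper_bounds {p A B : ℝ} (hp : 1 ≤ p) (hA : 0 < A) (hB : 0 ≤ B)
    (hBA : B ≤ A) :
    (A ^ (p - 1) - B ^ (p - 1)) * (A - B) ≤ max 2 (p - 1) * A ^ (p - 2) * (A - B) ^ 2 ∧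
      (A ^ (p - 1) + B ^ (p - 1)) * (A + B) ≤ max 2 (p - 1) * A ^ (p - 2) * (A + B) ^ 2 := by
  have hmax₁ : max 1 (p - 1) ≤ max 2 (p - 1) := max_le_max_right _ one_le_two
  have hBA' : B ^ (p - 1) ≤ A ^ (p - 1) := rpow_le_rpow hB hBA (by linarith)
  constructor
  · calc (A ^ (p - 1) - B ^ (p - 1)) * (A - B)
        ≤ max 1 (p - 1) * A ^ (p - 2) * (A - B) * (A - B) := by
          gcongr
          exact rpow_sub_rpow_le_max_one_mul_rpow_mul_sub hA hB hBA
      _ ≤ max 2 (p - 1) * A ^ (p - 2) * (A - B) ^ 2 := by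
          nlinarith [mul_le_mul_of_nonneg_right hmax₁
            (mul_nonneg (rpow_nonneg hA.le (p - 2)) (sq_nonneg (A - B)))]
  · calc (A ^ (p - 1) + B ^ (p - 1)) * (A + B) ≤ 2 * A ^ (p - 1) * (A + B) := by nlinarith
      _ = 2 * A ^ (p - 2) * (A * (A + B)) := by rw [← rpow_sub_two_mul_self hA]; ring
      _ ≤ max 2 (p - 1) * A ^ (p - 2) * (A + B) ^ 2 := by
        gcongr
        · exact le_max_left _ _
        · nlinarith

theorem rpow_le_two_rpow_abs_mul_rpow {x y : ℝ} (s : ℝ) (hxy : x ≤ 2 * y) (hyx : y ≤ 2 * x) :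
    x ^ s ≤ 2 ^ |s| * y ^ s := by
  rcases (show 0 ≤ y by linarith).eq_or_lt with hy | hy
  · have hx : x = 0 := by linarith
    rw [hx, ← hy]
    exact le_mul_of_one_le_left (rpow_nonneg le_rfl s) (one_le_rpow one_le_two (abs_nonneg s))
  rcases le_total 0 s with hs | hs
  · calc x ^ s ≤ (2 * y) ^ s := rpow_le_rpow (by linarith) hxy hs
      _ = 2 ^ |s| * y ^ s := by rw [abs_of_nonneg hs, mul_rpow zero_le_two hy.le]
  · calc x ^ s ≤ (y / 2) ^ s := rpow_le_rpow_of_nonpos (by positivity) (by linarith) hs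
      _ = 2 ^ |s| * y ^ s := by
        rw [abs_of_nonpos hs, div_rpow hy.le zero_le_two, rpow_neg zero_le_two, div_eq_inv_mul]

section InnerProductSpace

variable {E : Type*} [NormedAddCommGroup E] [InnerProductSpace ℝ E]

theorem real_inner_smul_sub_smul_sub (x y : ℝ) (a b : E) :
    inner ℝ (x • a - y • b) (a - b) = x * ‖a‖ ^ 2 + y * ‖b‖ ^ 2 - (x + y) * inner ℝ a b := by
  simp only [inner_sub_left, inner_sub_right, real_inner_smul_left, real_inner_self_eq_norm_sq,
    real_inner_comm a b]
  ring

theorem mul_norm_sub_sq_le_inner_smul_sub_smul {x y c : ℝ} (a b : E)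
    (haligned : c * (‖a‖ - ‖b‖) ^ 2 ≤ (x * ‖a‖ - y * ‖b‖) * (‖a‖ - ‖b‖))
    (hopposed : c * (‖a‖ + ‖b‖) ^ 2 ≤ (x * ‖a‖ + y * ‖b‖) * (‖a‖ + ‖b‖)) :
    c * ‖a - b‖ ^ 2 ≤ inner ℝ (x • a - y • b) (a - b) := by
  rw [real_inner_smul_sub_smul_sub, norm_sub_sq_real]
  have hs := abs_le.mp (abs_real_inner_le_norm a b)
  rcases le_total 0 (2 * c - x - y) with hk | hk
  · nlinarith [mul_le_mul_of_nonneg_left hs.1 hk]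
  · nlinarith [mul_le_mul_of_nonpos_left hs.2 hk]

theorem inner_smul_sub_smul_le_mul_norm_sub_sq {x y C : ℝ} (a b : E)
    (haligned : (x * ‖a‖ - y * ‖b‖) * (‖a‖ - ‖b‖) ≤ C * (‖a‖ - ‖b‖) ^ 2)
    (hopposed : (x * ‖a‖ + y * ‖b‖) * (‖a‖ + ‖b‖) ≤ C * (‖a‖ + ‖b‖) ^ 2) :
    inner ℝ (x • a - y • b) (a - b) ≤ C * ‖a - b‖ ^ 2 := by
  rw [real_inner_smul_sub_smul_sub, norm_sub_sq_real]
  have hs := abs_le.mp (abs_real_inner_le_norm a b)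
  rcases le_total 0 (2 * C - x - y) with hk | hk
  · nlinarith [mul_le_mul_of_nonneg_left hs.2 hk]
  · nlinarith [mul_le_mul_of_nonpos_left hs.1 hk]

theorem inner_norm_rpow_smul_sub_bounds {p : ℝ} (hp : 1 < p) (a b : E) :
    min 1 (p - 1) / 2 * max ‖a‖ ‖b‖ ^ (p - 2) * ‖a - b‖ ^ 2 ≤
        inner ℝ (‖a‖ ^ (p - 2) • a - ‖b‖ ^ (p - 2) • b) (a - b) ∧
      inner ℝ (‖a‖ ^ (p - 2) • a - ‖b‖ ^ (p - 2) • b) (a - b) ≤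
        max 2 (p - 1) * max ‖a‖ ‖b‖ ^ (p - 2) * ‖a - b‖ ^ 2 := by
  wlog hBA : ‖b‖ ≤ ‖a‖ generalizing a b
  · have := this b a (le_of_not_ge hBA)
    rwa [max_comm, norm_sub_rev, ← neg_sub a b, ← neg_sub (‖a‖ ^ (p - 2) • a), inner_neg_neg]
      at this
  rw [max_eq_left hBA]
  set A := ‖a‖
  set B := ‖b‖
  have hB : 0 ≤ B := norm_nonneg b
  rcases (hB.trans hBA).eq_or_lt with hA | hA
  · have ha : a = 0 := norm_eq_zero.mp hA.symm
    have hb : b = 0 := norm_eq_zero.mp (le_antisymm (hA ▸ hBA) hB)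
    simp [ha, hb]
  have hA' : A ^ (p - 2) * A = A ^ (p - 1) := rpow_sub_two_mul_self hA
  have hB' : B ^ (p - 2) * B = B ^ (p - 1) := by
    rw [← rpow_add_one' hB (by linarith)]; ring_nf
  obtain ⟨aligned_lower, opposed_lower⟩ := rpow_endpoint_lower_bounds hp.le hA hB hBA
  obtain ⟨aligned_upper, opposed_upper⟩ := rpow_endpoint_upper_bounds hp.le hA hB hBA
  rw [← hA', ← hB'] at aligned_lower opposed_lower aligned_upper opposed_upper
  exact ⟨mul_norm_sub_sq_le_inner_smul_sub_smul a b aligned_lower opposed_lower,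
    inner_smul_sub_smul_le_mul_norm_sub_sq a b aligned_upper opposed_upper⟩

end InnerProductSpace

theorem stmt_15 (n : ℕ) (p : ℝ) (hp : 1 < p) :
    ∃ C3 C4 : ℝ, 0 < C3 ∧ 0 < C4 ∧
      ∀ ζ1 ζ2 : EuclideanSpace ℝ (Fin n),
        C3 * (max ‖ζ1 - ζ2‖ ‖ζ2‖) ^ (p - 2) * ‖ζ1 - ζ2‖ ^ 2 ≤
            inner ℝ ((‖ζ1‖ ^ (p - 2)) • ζ1 - (‖ζ2‖ ^ (p - 2)) • ζ2) (ζ1 - ζ2) ∧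
          (inner ℝ ((‖ζ1‖ ^ (p - 2)) • ζ1 - (‖ζ2‖ ^ (p - 2)) • ζ2) (ζ1 - ζ2) : ℝ) ≤
            C4 * (max ‖ζ1 - ζ2‖ ‖ζ2‖) ^ (p - 2) * ‖ζ1 - ζ2‖ ^ 2 := by
  have hmin : 0 < min 1 (p - 1) := lt_min one_pos (sub_pos.2 hp)
  refine ⟨min 1 (p - 1) / 2 / 2 ^ |p - 2|, 2 ^ |p - 2| * max 2 (p - 1), by positivity,
    by positivity, fun a b => ?_⟩
  obtain ⟨hlower, hupper⟩ := inner_norm_rpow_smul_sub_bounds hp a b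
  have hMm : max ‖a - b‖ ‖b‖ ≤ 2 * max ‖a‖ ‖b‖ := by
    have := norm_sub_le a b
    apply max_le <;> linarith [le_max_left ‖a‖ ‖b‖, le_max_right ‖a‖ ‖b‖, norm_nonneg a]
  have hmM : max ‖a‖ ‖b‖ ≤ 2 * max ‖a - b‖ ‖b‖ := by
    have := norm_le_norm_sub_add a b
    apply max_le <;> linarith [le_max_left ‖a - b‖ ‖b‖, le_max_right ‖a - b‖ ‖b‖, norm_nonneg b]
  constructor
  · calc min 1 (p - 1) / 2 / 2 ^ |p - 2| * max ‖a - b‖ ‖b‖ ^ (p - 2) * ‖a - b‖ ^ 2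
        = min 1 (p - 1) / 2 * (max ‖a - b‖ ‖b‖ ^ (p - 2) / 2 ^ |p - 2|) * ‖a - b‖ ^ 2 := by ring
      _ ≤ min 1 (p - 1) / 2 * max ‖a‖ ‖b‖ ^ (p - 2) * ‖a - b‖ ^ 2 := by
        gcongr
        exact (div_le_iff₀' (by positivity)).2 (rpow_le_two_rpow_abs_mul_rpow _ hMm hmM)
      _ ≤ _ := hlower
  · calc _ ≤ max 2 (p - 1) * max ‖a‖ ‖b‖ ^ (p - 2) * ‖a - b‖ ^ 2 := hupper
      _ ≤ max 2 (p - 1) * (2 ^ |p - 2| * max ‖a - b‖ ‖b‖ ^ (p - 2)) * ‖a - b‖ ^ 2 := by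
        gcongr
        exact rpow_le_two_rpow_abs_mul_rpow _ hmM hMm
      _ = 2 ^ |p - 2| * max 2 (p - 1) * max ‖a - b‖ ‖b‖ ^ (p - 2) * ‖a - b‖ ^ 2 := by ring
end

section
/- Let α ∈ [0,n) and 1 ≤ q < ∞ with αq < n. Define the fractional maximal operator M_α f(z) = sup_{ρ>0} ρ^α·(1/|B(z,ρ)|)∫_{B(z,ρ)} |f(ζ)| dζ. Then there exists C(α,q,n) > 0 such that for every f ∈ L^q(ℝⁿ) and every λ > 0, λ^q·|{z ∈ ℝⁿ : M_α f(z) > λ}|^(1 - αq/n) ≤ C(α,q,n)·∫_{ℝⁿ} |f|^q dζ. -/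
open MeasureTheory Metric Module Function

open scoped ENNReal

noncomputable def fracMaximal (n : ℕ) (α : ℝ) (f : EuclideanSpace ℝ (Fin n) → ℝ)
    (z : EuclideanSpace ℝ (Fin n)) : ℝ :=
  ⨆ r : {r : ℝ // 0 < r},
    r.1 ^ α * ((volume (ball z r.1)).toReal⁻¹ * ∫ ζ in ball z r.1, |f ζ|)

/-!
On a ball `B = B(z, r)`, Hölder's inequality turns `λ < r ^ α ⨍_B |f|` into
`λ ^ q |B(0,1)| ^ θ |B| ^ (1 - θ) ≤ ∫_B |f| ^ q` with `θ = α q / n`, because `r ^ (α q)` is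
`(|B| / |B(0,1)|) ^ θ`. Such balls have bounded radii, so Vitali's covering lemma yields
disjoint ones whose fourfold enlargements cover `{M_α f > λ}`. Since `t ↦ t ^ (1 - θ)` is
subadditive, summing the ball estimates over these disjoint balls bounds
`λ ^ q |{M_α f > λ}| ^ (1 - θ)` by `4 ^ n |B(0,1)| ^ (-θ) ∫ |f| ^ q`.
-/

theorem ENNReal.rpow_finsetSum_le_sum_rpow {ι : Type*} (s : Finset ι) (f : ι → ℝ≥0∞) {p : ℝ}
    (hp : 0 < p) (hp1 : p ≤ 1) : (∑ i ∈ s, f i) ^ p ≤ ∑ i ∈ s, f i ^ p := by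
  induction s using Finset.cons_induction with
  | empty => simp [ENNReal.zero_rpow_of_pos hp]
  | cons a s ha ih =>
    rw [Finset.sum_cons, Finset.sum_cons]
    exact (ENNReal.rpow_add_le_add_rpow _ _ hp.le hp1).trans (by gcongr)

theorem ENNReal.rpow_tsum_le_tsum_rpow {ι : Type*} (f : ι → ℝ≥0∞) {p : ℝ}
    (hp : 0 < p) (hp1 : p ≤ 1) : (∑' i, f i) ^ p ≤ ∑' i, f i ^ p := by
  rw [ENNReal.tsum_eq_iSup_sum, ENNReal.tsum_eq_iSup_sum]
  change ENNReal.orderIsoRpow p hp _ ≤ _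
  rw [OrderIso.map_iSup]
  exact iSup_mono fun s => ENNReal.rpow_finsetSum_le_sum_rpow s f hp hp1

theorem rpow_lintegral_le_measure_univ_mul_lintegral_rpow {α : Type*} [MeasurableSpace α]
    {ν : Measure α} {g : α → ℝ≥0∞} (hg : AEMeasurable g ν) {q : ℝ} (hq : 1 ≤ q) :
    (∫⁻ x, g x ∂ν) ^ q ≤ ν Set.univ ^ (q - 1) * ∫⁻ x, g x ^ q ∂ν := by
  have hq0 : 0 < q := one_pos.trans_le hq
  have holder := eLpNorm'_le_eLpNorm'_mul_rpow_measure_univ one_pos hq hg.aestronglyMeasurable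
  simp only [eLpNorm'_eq_lintegral_enorm, enorm_eq_self, ENNReal.rpow_one, div_one] at holder
  calc (∫⁻ x, g x ∂ν) ^ q
      ≤ ((∫⁻ x, g x ^ q ∂ν) ^ (1 / q) * ν Set.univ ^ (1 - 1 / q)) ^ q := by gcongr
    _ = ν Set.univ ^ (q - 1) * ∫⁻ x, g x ^ q ∂ν := by
      rw [ENNReal.mul_rpow_of_nonneg _ _ hq0.le, ← ENNReal.rpow_mul, ← ENNReal.rpow_mul,
        one_div_mul_cancel hq0.ne', ENNReal.rpow_one, sub_mul, one_div_mul_cancel hq0.ne',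
        one_mul, mul_comm]

theorem ofReal_mul_measure_le_of_lt_mul_average {α : Type*} [MeasurableSpace α]
    {μ : Measure α} {s : Set α} (hs : μ s ≠ ∞) {f : α → ℝ} {t c : ℝ} (hc : 0 ≤ c)
    (h : t < c * ((μ s).toReal⁻¹ * ∫ x in s, |f x| ∂μ)) :
    ENNReal.ofReal t * μ s ≤ ENNReal.ofReal c * ∫⁻ x in s, ‖f x‖ₑ ∂μ := by
  rcases le_or_gt t 0 with ht | ht
  · simp [ENNReal.ofReal_of_nonpos ht]
  have hs0 : 0 < (μ s).toReal := by
    by_contra! h0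
    rw [le_antisymm h0 ENNReal.toReal_nonneg, inv_zero, zero_mul, mul_zero] at h
    exact ht.not_gt h
  have hint : ∫ x in s, |f x| ∂μ ≤ (∫⁻ x in s, ‖f x‖ₑ ∂μ).toReal := by
    simpa [Real.enorm_eq_ofReal_abs] using
      (le_abs_self _).trans (norm_integral_le_lintegral_norm (μ := μ.restrict s) fun x => |f x|)
  have hreal : t * (μ s).toReal ≤ c * (∫⁻ x in s, ‖f x‖ₑ ∂μ).toReal := by
    calc t * (μ s).toReal ≤ c * ∫ x in s, |f x| ∂μ := by
          have := mul_lt_mul_of_pos_right h hs0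
          rw [show c * ((μ s).toReal⁻¹ * ∫ x in s, |f x| ∂μ) * (μ s).toReal
            = c * ∫ x in s, |f x| ∂μ by field_simp] at this
          exact this.le
      _ ≤ _ := by gcongr
  calc ENNReal.ofReal t * μ s = ENNReal.ofReal (t * (μ s).toReal) := by
        rw [ENNReal.ofReal_mul ht.le, ENNReal.ofReal_toReal hs]
    _ ≤ ENNReal.ofReal (c * (∫⁻ x in s, ‖f x‖ₑ ∂μ).toReal) := ENNReal.ofReal_le_ofReal hreal
    _ ≤ ENNReal.ofReal c * ∫⁻ x in s, ‖f x‖ₑ ∂μ := by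
        rw [ENNReal.ofReal_mul hc]
        gcongr
        exact ENNReal.ofReal_toReal_le

section AddHaar

variable {E : Type*} [NormedAddCommGroup E] [NormedSpace ℝ E] [MeasurableSpace E] [BorelSpace E]
  [FiniteDimensional ℝ E] (μ : Measure E) [μ.IsAddHaarMeasure]

theorem addHaar_ball_rpow_div_finrank [Nontrivial E] (z : E) {r : ℝ} (hr : 0 < r) (β : ℝ) :
    μ (ball z r) ^ (β / finrank ℝ E) = ENNReal.ofReal r ^ β * μ (ball 0 1) ^ (β / finrank ℝ E) := by
  have hd : (finrank ℝ E : ℝ) ≠ 0 := by exact_mod_cast (finrank_pos (R := ℝ) (M := E)).ne'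
  rw [Measure.addHaar_ball_of_pos μ z hr,
    ENNReal.mul_rpow_of_ne_top ENNReal.ofReal_ne_top measure_ball_lt_top.ne,
    ENNReal.ofReal_pow hr.le, ← ENNReal.rpow_natCast, ← ENNReal.rpow_mul, mul_div_cancel₀ _ hd]

theorem rpow_mul_measure_ball_rpow_le_lintegral_rpow [Nontrivial E] {g : E → ℝ≥0∞}
    (hg : AEMeasurable g μ) {t : ℝ≥0∞} {α q r : ℝ} (hα : 0 ≤ α) (hq : 1 ≤ q) (hr : 0 < r) {z : E}
    (h : t * μ (ball z r) ≤ ENNReal.ofReal (r ^ α) * ∫⁻ x in ball z r, g x ∂μ) :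
    t ^ q * μ (ball 0 1) ^ (α * q / finrank ℝ E) * μ (ball z r) ^ (1 - α * q / finrank ℝ E) ≤
      ∫⁻ x in ball z r, g x ^ q ∂μ := by
  have hq0 : 0 < q := one_pos.trans_le hq
  set θ := α * q / finrank ℝ E
  set m := μ (ball z r)
  have hm0 : m ≠ 0 := (measure_ball_pos μ z hr).ne'
  have hmt : m ≠ ∞ := measure_ball_lt_top.ne
  have hρ0 : ENNReal.ofReal r ^ (α * q) ≠ 0 := by simp [hr]
  have hρt : ENNReal.ofReal r ^ (α * q) ≠ ∞ := by simp [ENNReal.rpow_eq_top_iff, hr.not_ge]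
  have hm1 : m ^ (q - 1) ≠ 0 := by simp [ENNReal.rpow_eq_zero_iff, hm0, hmt]
  have hm1t : m ^ (q - 1) ≠ ∞ := by simp [ENNReal.rpow_eq_top_iff, hm0, hmt]
  have hmq : m * m ^ (q - 1) = m ^ q := by
    conv_rhs =>
      rw [← add_sub_cancel 1 q, ENNReal.rpow_add_of_nonneg _ _ zero_le_one (by linarith),
        ENNReal.rpow_one]
  have holder : t ^ q * m ≤ ENNReal.ofReal r ^ (α * q) * ∫⁻ x in ball z r, g x ^ q ∂μ := by
    refine (ENNReal.mul_le_mul_iff_left hm1 hm1t).1 ?_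
    calc t ^ q * m * m ^ (q - 1) = (t * m) ^ q := by
          rw [ENNReal.mul_rpow_of_nonneg _ _ hq0.le, mul_assoc, hmq]
      _ ≤ (ENNReal.ofReal (r ^ α) * ∫⁻ x in ball z r, g x ∂μ) ^ q := by gcongr
      _ ≤ ENNReal.ofReal r ^ (α * q) * (m ^ (q - 1) * ∫⁻ x in ball z r, g x ^ q ∂μ) := by
          rw [ENNReal.mul_rpow_of_nonneg _ _ hq0.le, ← ENNReal.ofReal_rpow_of_nonneg hr.le hα,
            ← ENNReal.rpow_mul]
          gcongr
          simpa using rpow_lintegral_le_measure_univ_mul_lintegral_rpow hg.restrict hq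
      _ = _ := by ring
  refine (ENNReal.mul_le_mul_iff_left hρ0 hρt).1 ?_
  calc t ^ q * μ (ball 0 1) ^ θ * m ^ (1 - θ) * ENNReal.ofReal r ^ (α * q)
      = t ^ q * (m ^ (1 - θ) * m ^ θ) := by
        rw [addHaar_ball_rpow_div_finrank μ z hr]; ring
    _ = t ^ q * m := by rw [← ENNReal.rpow_add _ _ hm0 hmt, sub_add_cancel, ENNReal.rpow_one]
    _ ≤ _ := holder.trans_eq (mul_comm _ _)

theorem exists_bound_of_measure_ball_le [Nontrivial E] {M : ℝ≥0∞} (hM : M ≠ ∞) :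
    ∃ R : ℝ, ∀ (z : E) (r : ℝ), μ (ball z r) ≤ M → r ≤ R := by
  have hsup : ⨆ k : ℕ, μ (ball (0 : E) k) = ∞ := by
    rw [← Monotone.measure_iUnion, iUnion_ball_nat, measure_univ_of_isAddLeftInvariant]
    exact fun i j hij => ball_subset_ball (by exact_mod_cast hij)
  obtain ⟨k, hk⟩ := lt_iSup_iff.1 (hsup ▸ hM.lt_top)
  refine ⟨k, fun z r hr => le_of_not_gt fun hkr => ?_⟩
  rw [Measure.addHaar_ball_center] at hr
  exact (hk.trans_le ((measure_mono (ball_subset_ball hkr.le)).trans hr)).false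

theorem exists_countable_disjoint_balls_measure_le {S : Set E} {rad : E → ℝ} {R : ℝ}
    (hpos : ∀ z ∈ S, 0 < rad z) (hR : ∀ z ∈ S, rad z ≤ R) :
    ∃ u ⊆ S, u.Countable ∧ Pairwise (Disjoint on fun z : u => ball (z : E) (rad z)) ∧
      μ S ≤ ENNReal.ofReal (4 ^ finrank ℝ E) * ∑' z : u, μ (ball (z : E) (rad z)) := by
  obtain ⟨u, huS, hdisj, hcov⟩ :=
    Vitali.exists_disjoint_subfamily_covering_enlargement_closedBall S id rad R hR 4 (by norm_num)
  have hu : u.Countable := hdisj.countable_of_nonempty_interior fun z hz =>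
    ⟨z, ball_subset_interior_closedBall (mem_ball_self (hpos z (huS hz)))⟩
  have : Countable u := hu.to_subtype
  refine ⟨u, huS, hu, fun a b hab => (hdisj a.2 b.2 (Subtype.coe_injective.ne hab)).mono
    ball_subset_closedBall ball_subset_closedBall, ?_⟩
  have hS : S ⊆ ⋃ z : u, closedBall (z : E) (4 * rad z) := fun x hx => by
    obtain ⟨z, hz, hsub⟩ := hcov x hx
    exact Set.mem_iUnion.2 ⟨⟨z, hz⟩, hsub (mem_closedBall_self (hpos x hx).le)⟩
  calc μ S ≤ ∑' z : u, μ (closedBall (z : E) (4 * rad z)) :=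
        (measure_mono hS).trans (measure_iUnion_le _)
    _ = ∑' z : u, ENNReal.ofReal (4 ^ finrank ℝ E) * μ (ball (z : E) (rad z)) := by
        refine tsum_congr fun z => ?_
        have hz := hpos z (huS z.2)
        rw [Measure.addHaar_closedBall μ _ (by positivity), Measure.addHaar_ball_of_pos μ _ hz,
          mul_pow, ENNReal.ofReal_mul (by positivity), mul_assoc]
    _ = _ := ENNReal.tsum_mul_left

theorem mul_measure_rpow_le_of_forall_exists_ball [Nontrivial E] {S : Set E} {p : ℝ} (hp0 : 0 < p)
    (hp1 : p ≤ 1) {c : ℝ≥0∞} (hc : c ≠ 0) {g : E → ℝ≥0∞} (hg : ∫⁻ x, g x ∂μ ≠ ∞)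
    (hS : ∀ z ∈ S, ∃ r > 0, c * μ (ball z r) ^ p ≤ ∫⁻ x in ball z r, g x ∂μ) :
    c * μ S ^ p ≤ ENNReal.ofReal (4 ^ finrank ℝ E) * ∫⁻ x, g x ∂μ := by
  choose! rad hpos hrad using hS
  have hbound : ∀ z ∈ S, μ (ball z (rad z)) ≤ ((∫⁻ x, g x ∂μ) / c) ^ p⁻¹ := fun z hz => by
    rw [ENNReal.le_rpow_inv_iff hp0, ENNReal.le_div_iff_mul_le (.inl hc) (.inr hg), mul_comm]
    exact (hrad z hz).trans (setLIntegral_le_lintegral _ _)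
  obtain ⟨R, hR⟩ := exists_bound_of_measure_ball_le μ
    (ENNReal.rpow_ne_top_of_nonneg (inv_nonneg.2 hp0.le) (ENNReal.div_ne_top hg hc))
  obtain ⟨u, huS, hu, hdisj, hμS⟩ := exists_countable_disjoint_balls_measure_le μ hpos
    fun z hz => hR z _ (hbound z hz)
  have : Countable u := hu.to_subtype
  set K := ENNReal.ofReal (4 ^ finrank ℝ E)
  have hK : K ^ p ≤ K := by
    simpa using ENNReal.rpow_le_rpow_of_exponent_le (by simp [K, one_le_pow₀]) hp1
  calc c * μ S ^ p ≤ c * (K * ∑' z : u, μ (ball (z : E) (rad z))) ^ p := by gcongr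
    _ ≤ c * (K * ∑' z : u, μ (ball (z : E) (rad z)) ^ p) := by
        rw [ENNReal.mul_rpow_of_nonneg _ _ hp0.le]
        gcongr
        exact ENNReal.rpow_tsum_le_tsum_rpow _ hp0 hp1
    _ = K * ∑' z : u, c * μ (ball (z : E) (rad z)) ^ p := by
        rw [ENNReal.tsum_mul_left]; ring
    _ ≤ K * ∑' z : u, ∫⁻ x in ball (z : E) (rad z), g x ∂μ := by
        gcongr with z
        exact hrad z (huS z.2)
    _ ≤ K * ∫⁻ x, g x ∂μ := by
        rw [← lintegral_iUnion (fun _ => measurableSet_ball) hdisj]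
        gcongr K * ?_
        exact setLIntegral_le_lintegral _ _

end AddHaar

theorem lintegral_enorm_rpow_eq_ofReal_integral {α : Type*} [MeasurableSpace α] {μ : Measure α}
    {f : α → ℝ} {q : ℝ} (hq : 0 ≤ q) (hint : Integrable (fun x => |f x| ^ q) μ) :
    ∫⁻ x, ‖f x‖ₑ ^ q ∂μ = ENNReal.ofReal (∫ x, |f x| ^ q ∂μ) := by
  rw [ofReal_integral_eq_lintegral_ofReal hint (.of_forall fun x => by positivity)]
  refine lintegral_congr fun x => ?_
  rw [Real.enorm_eq_ofReal_abs, ENNReal.ofReal_rpow_of_nonneg (abs_nonneg _) hq]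

theorem exists_lt_of_lt_fracMaximal {n : ℕ} {α lam : ℝ} {f : EuclideanSpace ℝ (Fin n) → ℝ}
    {z : EuclideanSpace ℝ (Fin n)} (h : lam < fracMaximal n α f z) :
    ∃ r > 0, lam < r ^ α * ((volume (ball z r)).toReal⁻¹ * ∫ ζ in ball z r, |f ζ|) := by
  have : Nonempty {r : ℝ // 0 < r} := ⟨⟨1, one_pos⟩⟩
  obtain ⟨r, hr⟩ := exists_lt_of_lt_ciSup h
  exact ⟨r.1, r.2, hr⟩

theorem exists_ball_estimate_of_lt_fracMaximal {n : ℕ} [NeZero n] {α q lam : ℝ} (hα : 0 ≤ α)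
    (hq : 1 ≤ q) {f : EuclideanSpace ℝ (Fin n) → ℝ} (hf : Measurable f)
    {z : EuclideanSpace ℝ (Fin n)} (hz : lam < fracMaximal n α f z) :
    ∃ r > 0, ENNReal.ofReal lam ^ q * volume (ball (0 : EuclideanSpace ℝ (Fin n)) 1) ^ (α * q / n)
      * volume (ball z r) ^ (1 - α * q / n) ≤ ∫⁻ ζ in ball z r, ‖f ζ‖ₑ ^ q := by
  obtain ⟨r, hr, hlt⟩ := exists_lt_of_lt_fracMaximal hz
  refine ⟨r, hr, ?_⟩
  simpa [finrank_euclideanSpace_fin] using rpow_mul_measure_ball_rpow_le_lintegral_rpow volume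
    hf.enorm.aemeasurable hα hq hr
    (ofReal_mul_measure_le_of_lt_mul_average measure_ball_lt_top.ne (by positivity) hlt)

theorem stmt_16_general (n : ℕ) (α q : ℝ) (hα : 0 ≤ α) (hq : 1 ≤ q)
    (hαq : α * q < n) :
    ∃ C : ℝ, 0 < C ∧
      ∀ f : EuclideanSpace ℝ (Fin n) → ℝ, Measurable f →
        Integrable (fun ζ => |f ζ| ^ q) volume →
          ∀ lam : ℝ, 0 < lam →
            lam ^ q *
                (volume {z : EuclideanSpace ℝ (Fin n) | lam < fracMaximal n α f z}).toReal
                  ^ (1 - α * q / n) ≤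
              C * ∫ ζ, |f ζ| ^ q := by
  have hαq0 : 0 ≤ α * q := mul_nonneg hα (zero_le_one.trans hq)
  have : NeZero n := ⟨by exact_mod_cast (hαq0.trans_lt hαq).ne'⟩
  set θ := α * q / n
  have hθ1 : θ < 1 := (div_lt_one (hαq0.trans_lt hαq)).2 hαq
  set V := volume (ball (0 : EuclideanSpace ℝ (Fin n)) 1)
  have hV0 : V ≠ 0 := (measure_ball_pos _ _ one_pos).ne'
  have hVt : V ≠ ∞ := measure_ball_lt_top.ne
  have hV : 0 < V.toReal := ENNReal.toReal_pos hV0 hVt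
  refine ⟨4 ^ n / V.toReal ^ θ, by positivity, fun f hf hint lam hlam => ?_⟩
  have hT := lintegral_enorm_rpow_eq_ofReal_integral (by linarith) hint
  have hc : ENNReal.ofReal lam ^ q * V ^ θ ≠ 0 := by
    simp [ENNReal.rpow_eq_zero_iff, hlam, hV0, hVt]
  have key := mul_measure_rpow_le_of_forall_exists_ball volume
    (S := {z | lam < fracMaximal n α f z}) (sub_pos.2 hθ1)
    (by linarith [show 0 ≤ θ by positivity]) hc (hT ▸ ENNReal.ofReal_ne_top)
    fun z hz => exists_ball_estimate_of_lt_fracMaximal hα hq hf hz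
  rw [hT, finrank_euclideanSpace_fin, ← ENNReal.ofReal_mul (by positivity)] at key
  have key_real := ENNReal.toReal_mono ENNReal.ofReal_ne_top key
  simp only [ENNReal.toReal_mul, ← ENNReal.toReal_rpow, ENNReal.toReal_ofReal hlam.le,
    ENNReal.toReal_ofReal (by positivity : (0 : ℝ) ≤ 4 ^ n * ∫ ζ, |f ζ| ^ q)] at key_real
  rw [div_mul_eq_mul_div, le_div_iff₀ (by positivity)]
  linarith

theorem stmt_16 (n : ℕ) (hn : 1 ≤ n) (α q : ℝ) (hα : 0 ≤ α) (hq : 1 ≤ q)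
    (hαq : α * q < n) :
    ∃ C : ℝ, 0 < C ∧
      ∀ f : EuclideanSpace ℝ (Fin n) → ℝ, Measurable f →
        Integrable (fun ζ => |f ζ| ^ q) volume →
          ∀ lam : ℝ, 0 < lam →
            lam ^ q *
                (volume {z : EuclideanSpace ℝ (Fin n) | lam < fracMaximal n α f z}).toReal
                  ^ (1 - α * q / n) ≤
              C * ∫ ζ, |f ζ| ^ q :=
  stmt_16_general n α q hα hq hαq
end
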